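/- arXiv:1910.06452 — 6 statements merged into one kernel-verified Lean document; each statement's English description precedes it below -/
import Mathlib

section
/- Let x̃ = (x̃¹, …, x̃ⁿ) be a pure-strategy Nash equilibrium of the convexified game, i.e., x̃ⁱ ∈ cl(conv F_i) for each i and, for every i and every z ∈ cl(conv F_i), f_i(x̃) ≤ f_i(x̃¹, …, x̃^{i−1}, z, x̃^{i+1}, …, x̃ⁿ). Suppose moreover that for each i there exist points x̂ⁱ₁, …, x̂ⁱ_{k_i} ∈ F_i and weights pⁱ₁, …, pⁱ_{k_i} ≥ 0 with Σ_{j=1}^{k_i} pⁱ_j = 1 and x̃ⁱ = Σ_{j=1}^{k_i} pⁱ_j x̂ⁱ_j. Then the profile of finitely supported mixed strategies in which player i plays x̂ⁱ_j with probability pⁱ_j is a mixed-strategy Nash equilibrium of the original game with pure-strategy sets F₁, …, Fₙ. -/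
open Matrix Finset

section auxMNE

variable {n : ℕ} {k : Fin n → ℕ}

private lemma mne_sumW (p : ∀ l, Fin (k l) → ℝ) (hps : ∀ l, ∑ j, p l j = 1) :
    ∑ J : ∀ l, Fin (k l), ∏ l, p l (J l) = 1 := by
  rw [← Fintype.prod_sum]; simp [hps]

private lemma mne_E0 (p : ∀ l, Fin (k l) → ℝ) (hps : ∀ l, ∑ j, p l j = 1)
    (l0 : Fin n) (h : Fin (k l0) → ℝ) :
    ∑ J : ∀ l, Fin (k l), (∏ l, p l (J l)) * h (J l0) = ∑ m, p l0 m * h m := by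
  classical
  set g : ∀ l, Fin (k l) → ℝ := Function.update p l0 (fun m => p l0 m * h m) with hg
  have key : ∀ J : ∀ l, Fin (k l), (∏ l, p l (J l)) * h (J l0) = ∏ l, g l (J l) := by
    intro J
    rw [← Finset.mul_prod_erase univ (fun l => g l (J l)) (mem_univ l0),
        ← Finset.mul_prod_erase univ (fun l => p l (J l)) (mem_univ l0)]
    have h2 : ∏ l ∈ univ.erase l0, g l (J l) = ∏ l ∈ univ.erase l0, p l (J l) :=
      Finset.prod_congr rfl fun l hl => by
        rw [hg, Function.update_of_ne (Finset.ne_of_mem_erase hl)]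
    have h1 : g l0 = fun m => p l0 m * h m := Function.update_self _ _ _
    rw [h1, h2]; ring
  simp_rw [key]
  rw [← Fintype.prod_sum, ← Finset.mul_prod_erase univ _ (mem_univ l0)]
  have h3 : ∏ l ∈ univ.erase l0, ∑ m, g l m = 1 := Finset.prod_eq_one fun l hl => by
    rw [hg, Function.update_of_ne (Finset.ne_of_mem_erase hl)]; exact hps l
  have h1 : g l0 = fun m => p l0 m * h m := Function.update_self _ _ _
  rw [h3, h1, mul_one]

private lemma mne_E2 (p : ∀ l, Fin (k l) → ℝ) (hps : ∀ l, ∑ j, p l j = 1)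
    {i j : Fin n} (hij : i ≠ j) (h1 : Fin (k i) → ℝ) (h2 : Fin (k j) → ℝ) :
    ∑ J : ∀ l, Fin (k l), (∏ l, p l (J l)) * (h1 (J i) * h2 (J j)) =
      (∑ m, p i m * h1 m) * (∑ m, p j m * h2 m) := by
  classical
  set g : ∀ l, Fin (k l) → ℝ :=
    Function.update (Function.update p i (fun m => p i m * h1 m)) j (fun m => p j m * h2 m)
    with hg
  have hgi : g i = fun m => p i m * h1 m := by
    rw [hg, Function.update_of_ne hij, Function.update_self]
  have hgj : g j = fun m => p j m * h2 m := Function.update_self _ _ _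
  have hgo : ∀ l, l ≠ i → l ≠ j → g l = p l := by
    intro l hli hlj
    rw [hg, Function.update_of_ne hlj, Function.update_of_ne hli]
  have hjmem : j ∈ univ.erase i := Finset.mem_erase.2 ⟨hij.symm, mem_univ _⟩
  have split : ∀ (t : ∀ l : Fin n, ℝ),
      ∏ l, t l = t i * (t j * ∏ l ∈ (univ.erase i).erase j, t l) := by
    intro t
    rw [Finset.mul_prod_erase _ _ hjmem, Finset.mul_prod_erase _ _ (mem_univ i)]
  have key : ∀ J : ∀ l, Fin (k l),
      (∏ l, p l (J l)) * (h1 (J i) * h2 (J j)) = ∏ l, g l (J l) := by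
    intro J
    rw [split (fun l => g l (J l)), split (fun l => p l (J l))]
    have hrest : ∏ l ∈ (univ.erase i).erase j, g l (J l) =
        ∏ l ∈ (univ.erase i).erase j, p l (J l) :=
      Finset.prod_congr rfl fun l hl => by
        have hl' := Finset.mem_erase.1 hl
        have hl'' := Finset.mem_erase.1 hl'.2
        rw [hgo l hl''.1 hl'.1]
    simp only [hrest, hgi, hgj]; ring
  simp_rw [key]
  rw [← Fintype.prod_sum, split (fun l => ∑ m, g l m)]
  have hrest : ∏ l ∈ (univ.erase i).erase j, ∑ m, g l m = 1 :=
    Finset.prod_eq_one fun l hl => by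
      have hl' := Finset.mem_erase.1 hl
      have hl'' := Finset.mem_erase.1 hl'.2
      rw [hgo l hl''.1 hl'.1]; exact hps l
  rw [hrest, hgi, hgj, mul_one]

private lemma mne_Ebil (p : ∀ l, Fin (k l) → ℝ) (hps : ∀ l, ∑ j, p l j = 1)
    {i j : Fin n} (hij : i ≠ j) {di dj : ℕ} (A : Matrix (Fin di) (Fin dj) ℝ)
    (x : Fin (k i) → Fin di → ℝ) (y : Fin (k j) → Fin dj → ℝ)
    (X : Fin di → ℝ) (Y : Fin dj → ℝ)
    (hX : ∀ a, X a = ∑ m, p i m * x m a) (hY : ∀ b, Y b = ∑ m, p j m * y m b) :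
    ∑ J : ∀ l, Fin (k l), (∏ l, p l (J l)) * ((x (J i)) ⬝ᵥ (A *ᵥ (y (J j)))) =
      X ⬝ᵥ (A *ᵥ Y) := by
  have lhs_eq : ∀ J : ∀ l, Fin (k l),
      (∏ l, p l (J l)) * ((x (J i)) ⬝ᵥ (A *ᵥ (y (J j)))) =
      ∑ a, ∑ b, (∏ l, p l (J l)) * (x (J i) a * (A a b * y (J j) b)) := by
    intro J; simp [dotProduct, mulVec, Finset.mul_sum, mul_assoc]
  simp_rw [lhs_eq]
  rw [Finset.sum_comm]
  have step : ∀ a, ∑ J : ∀ l, Fin (k l), ∑ b,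
      (∏ l, p l (J l)) * (x (J i) a * (A a b * y (J j) b)) =
      ∑ b, (∑ m, p i m * x m a) * (∑ m, p j m * (A a b * y m b)) := by
    intro a
    rw [Finset.sum_comm]
    exact Finset.sum_congr rfl fun b _ =>
      mne_E2 p hps hij (fun m => x m a) (fun m => A a b * y m b)
  simp_rw [step]
  simp [dotProduct, mulVec, Finset.mul_sum, hX, hY]
  apply Finset.sum_congr rfl; intro a _
  apply Finset.sum_congr rfl; intro b _
  apply Finset.sum_congr rfl; intro m _
  ring

private lemma mne_Elin (p : ∀ l, Fin (k l) → ℝ) (hps : ∀ l, ∑ j, p l j = 1)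
    {j : Fin n} {di dj : ℕ} (z : Fin di → ℝ) (A : Matrix (Fin di) (Fin dj) ℝ)
    (y : Fin (k j) → Fin dj → ℝ) (Y : Fin dj → ℝ)
    (hY : ∀ b, Y b = ∑ m, p j m * y m b) :
    ∑ J : ∀ l, Fin (k l), (∏ l, p l (J l)) * (z ⬝ᵥ (A *ᵥ (y (J j)))) =
      z ⬝ᵥ (A *ᵥ Y) := by
  rw [mne_E0 p hps j (fun m => z ⬝ᵥ (A *ᵥ (y m)))]
  simp [dotProduct, mulVec, Finset.mul_sum, hY]
  rw [Finset.sum_comm]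
  apply Finset.sum_congr rfl; intro a _
  rw [Finset.sum_comm]
  apply Finset.sum_congr rfl; intro b _
  apply Finset.sum_congr rfl; intro m _
  ring

end auxMNE

/-- If `x̃` is a pure Nash equilibrium of the convexified game
(each player's feasible set replaced by the closure of its convex hull), and each
`x̃ⁱ` is a finite convex combination of points of `Fᵢ`, then the corresponding
finitely supported mixed-strategy profile is an MNE of the original game. -/
theorem convexified_pne_gives_mne
    (n : ℕ) (d : Fin n → ℕ) (F : ∀ i, Set (Fin (d i) → ℝ))
    (c : ∀ i, Fin (d i) → ℝ) (C : ∀ i j, Matrix (Fin (d i)) (Fin (d j)) ℝ)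
    (f : Fin n → (∀ l, Fin (d l) → ℝ) → ℝ)
    (hf : ∀ i x, f i x = c i ⬝ᵥ x i + ∑ j ∈ Finset.univ.erase i, (x i) ⬝ᵥ ((C i j) *ᵥ (x j)))
    (xt : ∀ i, Fin (d i) → ℝ)
    (hmem : ∀ i, xt i ∈ closure (convexHull ℝ (F i)))
    (heq : ∀ i, ∀ z ∈ closure (convexHull ℝ (F i)), f i xt ≤ f i (Function.update xt i z))
    (k : Fin n → ℕ) (xh : ∀ i, Fin (k i) → Fin (d i) → ℝ) (p : ∀ i, Fin (k i) → ℝ)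
    (hxh : ∀ i j, xh i j ∈ F i) (hp : ∀ i j, 0 ≤ p i j) (hps : ∀ i, ∑ j, p i j = 1)
    (hdecomp : ∀ i, xt i = ∑ j, p i j • xh i j) :
    ∀ i, ∀ z ∈ F i,
      ∑ J : ∀ l, Fin (k l), (∏ l, p l (J l)) * f i (fun l => xh l (J l)) ≤
        ∑ J : ∀ l, Fin (k l), (∏ l, p l (J l)) *
          f i (Function.update (fun l => xh l (J l)) i z) := by
  intro i z hz
  have hzc : z ∈ closure (convexHull ℝ (F i)) :=
    subset_closure (subset_convexHull ℝ _ hz)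
  have hx : ∀ l a, xt l a = ∑ m, p l m * xh l m a := by
    intro l a
    rw [hdecomp l]
    simp [Finset.sum_apply]
  have hL : ∑ J : ∀ l, Fin (k l), (∏ l, p l (J l)) * f i (fun l => xh l (J l)) =
      f i xt := by
    rw [hf i xt]
    simp only [hf]
    simp only [mul_add, Finset.mul_sum]
    rw [Finset.sum_add_distrib]
    congr 1
    · rw [mne_E0 p hps i (fun m => c i ⬝ᵥ xh i m)]
      simp only [dotProduct, hx, Finset.mul_sum]
      rw [Finset.sum_comm]
      exact Finset.sum_congr rfl fun a _ => Finset.sum_congr rfl fun m _ => by ring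
    · rw [Finset.sum_comm]
      apply Finset.sum_congr rfl; intro j hj
      have hij : i ≠ j := (Finset.ne_of_mem_erase hj).symm
      exact mne_Ebil p hps hij (C i j) (xh i) (xh j) (xt i) (xt j) (hx i) (hx j)
  have hupdX : ∀ J : ∀ l, Fin (k l),
      f i (Function.update (fun l => xh l (J l)) i z) =
        c i ⬝ᵥ z + ∑ j ∈ univ.erase i, z ⬝ᵥ (C i j *ᵥ xh j (J j)) := by
    intro J
    rw [hf]
    congr 1
    · rw [Function.update_self]
    · apply Finset.sum_congr rfl; intro j hj
      rw [Function.update_self, Function.update_of_ne (Finset.ne_of_mem_erase hj)]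
  have hupdT : f i (Function.update xt i z) =
      c i ⬝ᵥ z + ∑ j ∈ univ.erase i, z ⬝ᵥ (C i j *ᵥ xt j) := by
    rw [hf]
    congr 1
    · rw [Function.update_self]
    · apply Finset.sum_congr rfl; intro j hj
      rw [Function.update_self, Function.update_of_ne (Finset.ne_of_mem_erase hj)]
  have hR : ∑ J : ∀ l, Fin (k l), (∏ l, p l (J l)) *
      f i (Function.update (fun l => xh l (J l)) i z) = f i (Function.update xt i z) := by
    simp_rw [hupdX]
    rw [hupdT]
    simp only [mul_add, Finset.mul_sum]
    rw [Finset.sum_add_distrib]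
    congr 1
    · rw [← Finset.sum_mul, mne_sumW p hps, one_mul]
    · rw [Finset.sum_comm]
      apply Finset.sum_congr rfl; intro j hj
      exact mne_Elin p hps z (C i j) (xh j) (xt j) (hx j)
  rw [hL, hR]
  exact heq i z hzc
end

section
/- Suppose the n-player game with pure-strategy sets F₁, …, Fₙ has a finitely supported mixed-strategy Nash equilibrium in which player i plays x̂ⁱ_j ∈ F_i with probability pⁱ_j (j = 1, …, k_i). Define x̃ⁱ = Σ_{j=1}^{k_i} pⁱ_j x̂ⁱ_j for each i. Then x̃ = (x̃¹, …, x̃ⁿ) is a pure-strategy Nash equilibrium of the convexified game: x̃ⁱ ∈ cl(conv F_i) for each i, and for every player i and every z ∈ cl(conv F_i), f_i(x̃) ≤ f_i(x̃¹, …, x̃^{i−1}, z, x̃^{i+1}, …, x̃ⁿ). -/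
open Matrix Finset

lemma piSum {n : ℕ} {k : Fin n → ℕ} (q : ∀ l, Fin (k l) → ℝ) :
    ∑ J : ∀ l, Fin (k l), ∏ l, q l (J l) = ∏ l, ∑ j, q l j := by
  rw [Finset.prod_univ_sum, Fintype.piFinset_univ]

lemma E1 {n : ℕ} {k : Fin n → ℕ} (p : ∀ l, Fin (k l) → ℝ) (hps : ∀ l, ∑ j, p l j = 1)
    (i : Fin n) (h : Fin (k i) → ℝ) :
    ∑ J : ∀ l, Fin (k l), (∏ l, p l (J l)) * h (J i) = ∑ a, p i a * h a := by
  set q : ∀ l, Fin (k l) → ℝ := Function.update p i (fun a => p i a * h a) with hqdef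
  have hqi : q i = fun a => p i a * h a := Function.update_self i _ p
  have hqo : ∀ l, l ≠ i → q l = p l := fun l hl => Function.update_of_ne hl _ p
  have key : ∀ J : ∀ l, Fin (k l),
      (∏ l, p l (J l)) * h (J i) = ∏ l, q l (J l) := by
    intro J
    have hrest : ∏ l ∈ Finset.univ.erase i, q l (J l) = ∏ l ∈ Finset.univ.erase i, p l (J l) :=
      Finset.prod_congr rfl fun l hl => by rw [hqo l (Finset.ne_of_mem_erase hl)]
    rw [← Finset.mul_prod_erase Finset.univ (fun l => q l (J l)) (Finset.mem_univ i),
        ← Finset.mul_prod_erase Finset.univ (fun l => p l (J l)) (Finset.mem_univ i),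
        hrest, hqi]
    ring
  rw [Finset.sum_congr rfl (fun J _ => key J), piSum,
    Finset.prod_eq_single i (fun l _ hl => by rw [hqo l hl]; exact hps l)
      (fun hi => absurd (Finset.mem_univ i) hi), hqi]

lemma E2 {n : ℕ} {k : Fin n → ℕ} (p : ∀ l, Fin (k l) → ℝ) (hps : ∀ l, ∑ j, p l j = 1)
    {i j : Fin n} (hij : j ≠ i) (u : Fin (k i) → ℝ) (v : Fin (k j) → ℝ) :
    ∑ J : ∀ l, Fin (k l), (∏ l, p l (J l)) * (u (J i) * v (J j)) =
      (∑ a, p i a * u a) * (∑ b, p j b * v b) := by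
  set q : ∀ l, Fin (k l) → ℝ :=
    Function.update (Function.update p i (fun a => p i a * u a)) j (fun b => p j b * v b) with hq
  have hqi : q i = fun a => p i a * u a := by
    rw [hq, Function.update_of_ne (Ne.symm hij), Function.update_self]
  have hqj : q j = fun b => p j b * v b := Function.update_self j _ _
  have hqo : ∀ l, l ≠ i → l ≠ j → q l = p l := by
    intro l h1 h2
    rw [hq, Function.update_of_ne h2, Function.update_of_ne h1]
  have hj : j ∈ Finset.univ.erase i := Finset.mem_erase.2 ⟨hij, Finset.mem_univ j⟩
  have key : ∀ J : ∀ l, Fin (k l),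
      (∏ l, p l (J l)) * (u (J i) * v (J j)) = ∏ l, q l (J l) := by
    intro J
    have hrest : ∏ l ∈ (Finset.univ.erase i).erase j, q l (J l) =
        ∏ l ∈ (Finset.univ.erase i).erase j, p l (J l) :=
      Finset.prod_congr rfl fun l hl => by
        rw [hqo l (Finset.ne_of_mem_erase (Finset.mem_of_mem_erase hl))
            (Finset.ne_of_mem_erase hl)]
    rw [← Finset.mul_prod_erase Finset.univ (fun l => q l (J l)) (Finset.mem_univ i),
        ← Finset.mul_prod_erase _ (fun l => q l (J l)) hj,
        ← Finset.mul_prod_erase Finset.univ (fun l => p l (J l)) (Finset.mem_univ i),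
        ← Finset.mul_prod_erase _ (fun l => p l (J l)) hj,
        hrest, hqi, hqj]
    ring
  rw [Finset.sum_congr rfl (fun J _ => key J), piSum,
      ← Finset.mul_prod_erase Finset.univ (fun l => ∑ jj, q l jj) (Finset.mem_univ i),
      ← Finset.mul_prod_erase _ (fun l => ∑ jj, q l jj) hj, hqi, hqj,
      Finset.prod_eq_one (fun l hl => by
        rw [hqo l (Finset.ne_of_mem_erase (Finset.mem_of_mem_erase hl))
            (Finset.ne_of_mem_erase hl)]
        exact hps l)]
  ring

lemma Elin {n : ℕ} {k : Fin n → ℕ} (p : ∀ l, Fin (k l) → ℝ) (hps : ∀ l, ∑ j, p l j = 1)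
    (i : Fin n) {m : ℕ} (w : Fin m → ℝ) (x : Fin (k i) → Fin m → ℝ) :
    ∑ J : ∀ l, Fin (k l), (∏ l, p l (J l)) * (w ⬝ᵥ x (J i)) =
      w ⬝ᵥ (∑ a, p i a • x a) := by
  rw [E1 p hps i (fun a => w ⬝ᵥ x a)]
  simp only [dotProduct, Finset.sum_apply, Pi.smul_apply, smul_eq_mul, Finset.mul_sum]
  rw [Finset.sum_comm]
  exact Finset.sum_congr rfl fun a _ => Finset.sum_congr rfl fun s _ => by ring

lemma Ebil {n : ℕ} {k : Fin n → ℕ} (p : ∀ l, Fin (k l) → ℝ) (hps : ∀ l, ∑ j, p l j = 1)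
    {i j : Fin n} (hij : j ≠ i) {m m' : ℕ} (M : Matrix (Fin m) (Fin m') ℝ)
    (x : Fin (k i) → Fin m → ℝ) (y : Fin (k j) → Fin m' → ℝ) :
    ∑ J : ∀ l, Fin (k l), (∏ l, p l (J l)) * (x (J i) ⬝ᵥ M *ᵥ y (J j)) =
      (∑ a, p i a • x a) ⬝ᵥ M *ᵥ (∑ b, p j b • y b) := by
  calc ∑ J : ∀ l, Fin (k l), (∏ l, p l (J l)) * (x (J i) ⬝ᵥ M *ᵥ y (J j))
      = ∑ J : ∀ l, Fin (k l), ∑ s, ∑ t,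
          (∏ l, p l (J l)) * (M s t * (x (J i) s * y (J j) t)) := by
        refine Finset.sum_congr rfl fun J _ => ?_
        simp only [dotProduct, mulVec, dotProduct, Finset.mul_sum]
        exact Finset.sum_congr rfl fun s _ => Finset.sum_congr rfl fun t _ => by ring
    _ = ∑ s, ∑ t, ∑ J : ∀ l, Fin (k l),
          (∏ l, p l (J l)) * (M s t * (x (J i) s * y (J j) t)) := by
        rw [Finset.sum_comm]
        exact Finset.sum_congr rfl fun s _ => Finset.sum_comm
    _ = ∑ s, ∑ t, M s t * ((∑ a, p i a * x a s) * (∑ b, p j b * y b t)) := by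
        refine Finset.sum_congr rfl fun s _ => Finset.sum_congr rfl fun t _ => ?_
        rw [← E2 p hps hij (fun a => x a s) (fun b => y b t), Finset.mul_sum]
        exact Finset.sum_congr rfl fun J _ => by ring
    _ = (∑ a, p i a • x a) ⬝ᵥ M *ᵥ (∑ b, p j b • y b) := by
        simp only [dotProduct, mulVec, Finset.sum_apply, Pi.smul_apply, smul_eq_mul,
          Finset.mul_sum]
        exact Finset.sum_congr rfl fun s _ => Finset.sum_congr rfl fun t _ =>
          Finset.sum_congr rfl fun b _ => by ring

lemma sum_dot {m : ℕ} {α : Type*} (s : Finset α) (v : α → Fin m → ℝ) (z : Fin m → ℝ) :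
    ∑ j ∈ s, z ⬝ᵥ v j = (∑ j ∈ s, v j) ⬝ᵥ z := by
  simp only [dotProduct, Finset.sum_apply, Finset.sum_mul]
  rw [Finset.sum_comm]
  exact Finset.sum_congr rfl fun j _ => Finset.sum_congr rfl fun t _ => mul_comm _ _

/-- If a game with linear-plus-bilinear costs has a finitely
supported mixed-strategy Nash equilibrium, then the profile of expectations
`x̃ⁱ = Σⱼ pⁱⱼ x̂ⁱⱼ` is a pure Nash equilibrium of the convexified game. -/
theorem mne_gives_convexified_pne
    (n : ℕ) (d : Fin n → ℕ) (F : ∀ i, Set (Fin (d i) → ℝ))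
    (c : ∀ i, Fin (d i) → ℝ) (C : ∀ i j, Matrix (Fin (d i)) (Fin (d j)) ℝ)
    (f : Fin n → (∀ l, Fin (d l) → ℝ) → ℝ)
    (hf : ∀ i x, f i x = c i ⬝ᵥ x i + ∑ j ∈ Finset.univ.erase i, (x i) ⬝ᵥ ((C i j) *ᵥ (x j)))
    (k : Fin n → ℕ) (xh : ∀ i, Fin (k i) → Fin (d i) → ℝ) (p : ∀ i, Fin (k i) → ℝ)
    (hxh : ∀ i j, xh i j ∈ F i) (hp : ∀ i j, 0 ≤ p i j) (hps : ∀ i, ∑ j, p i j = 1)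
    (hmne : ∀ i, ∀ z ∈ F i,
      ∑ J : ∀ l, Fin (k l), (∏ l, p l (J l)) * f i (fun l => xh l (J l)) ≤
        ∑ J : ∀ l, Fin (k l), (∏ l, p l (J l)) *
          f i (Function.update (fun l => xh l (J l)) i z))
    (xt : ∀ i, Fin (d i) → ℝ)
    (hxt : ∀ i, xt i = ∑ j, p i j • xh i j) :
    (∀ i, xt i ∈ closure (convexHull ℝ (F i))) ∧
    (∀ i, ∀ z ∈ closure (convexHull ℝ (F i)), f i xt ≤ f i (Function.update xt i z)) := by
  have hsumP : ∑ J : ∀ l, Fin (k l), ∏ l, p l (J l) = 1 := by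
    rw [piSum p]; simp [hps]
  constructor
  · intro i
    apply subset_closure
    rw [hxt i]
    exact (convex_convexHull ℝ (F i)).sum_mem (fun j _ => hp i j) (hps i)
      (fun j _ => subset_convexHull ℝ _ (hxh i j))
  · intro i
    set w : Fin (d i) → ℝ := c i + ∑ j ∈ Finset.univ.erase i, (C i j) *ᵥ (xt j) with hw
    have hupd : ∀ z : Fin (d i) → ℝ, f i (Function.update xt i z) = w ⬝ᵥ z := by
      intro z
      rw [hf, Function.update_self,
        Finset.sum_congr rfl (fun j hj => by
          rw [Function.update_of_ne (Finset.ne_of_mem_erase hj)])]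
      rw [hw, add_dotProduct]
      congr 1
      exact sum_dot _ _ _
    -- expectation of own cost equals cost of expectations
    have A : ∑ J : ∀ l, Fin (k l), (∏ l, p l (J l)) * f i (fun l => xh l (J l)) = f i xt := by
      calc ∑ J : ∀ l, Fin (k l), (∏ l, p l (J l)) * f i (fun l => xh l (J l))
          = ∑ J : ∀ l, Fin (k l), ((∏ l, p l (J l)) * (c i ⬝ᵥ xh i (J i)) +
              ∑ j ∈ Finset.univ.erase i,
                (∏ l, p l (J l)) * (xh i (J i) ⬝ᵥ C i j *ᵥ xh j (J j))) := by
            refine Finset.sum_congr rfl fun J _ => ?_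
            rw [hf, mul_add, Finset.mul_sum]
        _ = (∑ J : ∀ l, Fin (k l), (∏ l, p l (J l)) * (c i ⬝ᵥ xh i (J i))) +
              ∑ j ∈ Finset.univ.erase i, ∑ J : ∀ l, Fin (k l),
                (∏ l, p l (J l)) * (xh i (J i) ⬝ᵥ C i j *ᵥ xh j (J j)) := by
            rw [Finset.sum_add_distrib, Finset.sum_comm]
        _ = c i ⬝ᵥ xt i + ∑ j ∈ Finset.univ.erase i, xt i ⬝ᵥ C i j *ᵥ xt j := by
            rw [Elin p hps i (c i) (xh i), ← hxt i]
            congr 1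
            refine Finset.sum_congr rfl fun j hj => ?_
            rw [Ebil p hps (Finset.ne_of_mem_erase hj) (C i j) (xh i) (xh j),
              ← hxt i, ← hxt j]
        _ = f i xt := (hf i xt).symm
    have B : ∀ z : Fin (d i) → ℝ,
        ∑ J : ∀ l, Fin (k l), (∏ l, p l (J l)) *
          f i (Function.update (fun l => xh l (J l)) i z) = w ⬝ᵥ z := by
      intro z
      calc ∑ J : ∀ l, Fin (k l), (∏ l, p l (J l)) *
              f i (Function.update (fun l => xh l (J l)) i z)
          = ∑ J : ∀ l, Fin (k l), ((∏ l, p l (J l)) * (c i ⬝ᵥ z) +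
              ∑ j ∈ Finset.univ.erase i,
                (∏ l, p l (J l)) * (Matrix.vecMul z (C i j) ⬝ᵥ xh j (J j))) := by
            refine Finset.sum_congr rfl fun J _ => ?_
            rw [hf, Function.update_self, mul_add, Finset.mul_sum]
            congr 1
            refine Finset.sum_congr rfl fun j hj => ?_
            rw [Function.update_of_ne (Finset.ne_of_mem_erase hj),
              Matrix.dotProduct_mulVec]
        _ = (∑ J : ∀ l, Fin (k l), ∏ l, p l (J l)) * (c i ⬝ᵥ z) +
              ∑ j ∈ Finset.univ.erase i, ∑ J : ∀ l, Fin (k l),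
                (∏ l, p l (J l)) * (Matrix.vecMul z (C i j) ⬝ᵥ xh j (J j)) := by
            rw [Finset.sum_add_distrib, Finset.sum_comm, ← Finset.sum_mul]
        _ = c i ⬝ᵥ z + ∑ j ∈ Finset.univ.erase i, z ⬝ᵥ C i j *ᵥ xt j := by
            rw [hsumP, one_mul]
            congr 1
            refine Finset.sum_congr rfl fun j hj => ?_
            rw [Elin p hps j (Matrix.vecMul z (C i j)) (xh j), ← hxt j,
              ← Matrix.dotProduct_mulVec]
        _ = w ⬝ᵥ z := by
            rw [hw, add_dotProduct]
            congr 1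
            exact sum_dot _ _ _
    have hmem : F i ⊆ {z | f i xt ≤ w ⬝ᵥ z} := by
      intro z hz
      have h := hmne i z hz
      rw [A, B z] at h
      exact h
    have hlin : IsLinearMap ℝ (fun z : Fin (d i) → ℝ => w ⬝ᵥ z) :=
      ⟨fun a b => dotProduct_add w a b,
       fun r a => by rw [dotProduct_smul]⟩
    have hcont : Continuous (fun z : Fin (d i) → ℝ => w ⬝ᵥ z) := by
      simp only [dotProduct]
      exact continuous_finset_sum _ fun s _ => continuous_const.mul (continuous_apply s)
    have hclosed : IsClosed {z : Fin (d i) → ℝ | f i xt ≤ w ⬝ᵥ z} :=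
      isClosed_le continuous_const hcont
    have hsub : closure (convexHull ℝ (F i)) ⊆ {z | f i xt ≤ w ⬝ᵥ z} :=
      closure_minimal (convexHull_min hmem (convex_halfSpace_ge hlin (f i xt))) hclosed
    intro z hz
    rw [hupd z]
    exact hsub hz
end

section
/- If there exists an integer s with p ≤ s ≤ t − 1 such that Σ_{i∈I} q_i ≠ s for every subset I ⊆ {1, …, k} (i.e., the SUBSET SUM INTERVAL instance is a YES instance), then the two-player game (X, Ξ, u_L, u_G) has a pure-strategy Nash equilibrium. -/
open Finset

namespace PneHardness

variable (k r p t : ℕ) (q : ℕ → ℕ)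

/-- `P = k + 2r`. -/
def Pval (k r : ℕ) : ℕ := k + 2 * r

/-- `Q = Σ_{i=1}^k q_i`. -/
def Qval (k : ℕ) (q : ℕ → ℕ) : ℕ := ∑ i ∈ Finset.Icc 1 k, q i

/-- `T = t - 1 + rQ`. -/
def Tval (k r t : ℕ) (q : ℕ → ℕ) : ℕ := (t - 1) + r * Qval k q

/-- The Latin strategy set `X ⊆ ℝ^{2P+1}`, with coordinates `x 0, …, x (2P)`
(coordinates beyond index `2P` are pinned to `0`). -/
def Xset (k r : ℕ) : Set (ℕ → ℝ) :=
  {x | (∀ i ≤ 2 * Pval k r, x i ≤ 0 ∨ 1 ≤ x i) ∧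
       (∀ i, 1 ≤ i → i ≤ 2 * Pval k r → 0 ≤ x i) ∧
       (∀ i, 1 ≤ i → i ≤ k → x i = 0) ∧
       ((∑ i ∈ Finset.Icc (k + 1) (Pval k r), x i) ≤ (r : ℝ)) ∧
       (∀ i, 1 ≤ i → i ≤ Pval k r → x i + x (Pval k r + i) ≤ 1) ∧
       (∀ i, 1 ≤ i → i ≤ Pval k r → x 0 + x (Pval k r + i) ≤ 1) ∧
       (∀ i, 2 * Pval k r < i → x i = 0)}

/-- The Greek strategy set `Ξ ⊆ ℝ^{P+1}`, with coordinates `ξ 0, …, ξ P`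
(coordinates beyond index `P` are pinned to `0`). -/
def Ξset (k r t : ℕ) (q : ℕ → ℕ) : Set (ℕ → ℝ) :=
  {ξ | (∀ i ≤ Pval k r, ξ i = 0 ∨ ξ i = 1) ∧
       ((r : ℝ) ≤ (∑ i ∈ Finset.Icc (k + 1) (Pval k r), ξ i) + (r : ℝ) * ξ 0) ∧
       ((Tval k r t q : ℝ) * ξ 0 + (∑ i ∈ Finset.Icc 1 k, (q i : ℝ) * ξ i)
          + (Qval k q : ℝ) * (∑ i ∈ Finset.Icc (k + 1) (Pval k r), ξ i)
          + (∑ i ∈ Finset.Icc (k + 1) (k + r), (2 : ℝ) ^ (i - k - 1) * ξ i)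
          ≤ (Tval k r t q : ℝ)) ∧
       (∀ i, Pval k r < i → ξ i = 0)}

/-- The Latin payoff (maximized by the Latin player). -/
def uL (k r t : ℕ) (q : ℕ → ℕ) (x ξ : ℕ → ℝ) : ℝ :=
  ((Tval k r t q : ℝ) - 1) * ξ 0 * x 0
    + (∑ i ∈ Finset.Icc 1 k, (q i : ℝ) * ξ i * x (Pval k r + i))
    + (Qval k q : ℝ) * ∑ i ∈ Finset.Icc (k + 1) (Pval k r), ξ i * x (Pval k r + i)

/-- The Greek payoff (maximized by the Greek player). -/
def uG (k r t : ℕ) (q : ℕ → ℕ) (x ξ : ℕ → ℝ) : ℝ :=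
  ((Tval k r t q : ℝ) - 1) * ξ 0
    + (∑ i ∈ Finset.Icc 1 k, (q i : ℝ) * ξ i * (1 - x (Pval k r + i)))
    + (Qval k q : ℝ) * (∑ i ∈ Finset.Icc (k + 1) (Pval k r), ξ i * (1 - x i - x (Pval k r + i)))
    + (∑ i ∈ Finset.Icc (k + 1) (k + r),
        (2 : ℝ) ^ (i - k - 1) * ξ i * (1 - x i - x (Pval k r + i)))
    - (Tval k r t q : ℝ) * ∑ i ∈ Finset.Icc (k + 1) (Pval k r),
        (x i * ξ i + (1 - x i) * (1 - ξ i - ξ 0))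

lemma bits_sum : ∀ (r c : ℕ), c < 2^r → ∑ j ∈ range r, 2^j * (c / 2^j % 2) = c := by
  intro r
  induction r with
  | zero => intro c hc; simp at hc ⊢; omega
  | succ n ih =>
    intro c hc
    rw [Finset.sum_range_succ']
    have h1 : ∀ j, 2^(j+1) * (c / 2^(j+1) % 2) = 2 * (2^j * ((c/2) / 2^j % 2)) := by
      intro j
      have h2 : c / 2^(j+1) = (c/2) / 2^j := by
        rw [pow_succ', Nat.div_div_eq_div_mul]
      rw [h2]; ring
    have hlt : c / 2 < 2 ^ n := by
      rw [pow_succ] at hc; omega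
    calc ∑ j ∈ range n, 2^(j+1) * (c / 2^(j+1) % 2) + 2^0 * (c / 2^0 % 2)
        = 2 * (∑ j ∈ range n, 2^j * ((c/2) / 2^j % 2)) + c % 2 := by
          rw [Finset.mul_sum]; simp [h1]
      _ = 2 * (c/2) + c % 2 := by rw [ih (c/2) hlt]
      _ = c := by omega

lemma two_pow_sum (r : ℕ) : ∑ j ∈ range r, 2^j = 2^r - 1 := by
  induction r with
  | zero => simp
  | succ n ih => rw [Finset.sum_range_succ, ih]; have := Nat.one_le_two_pow (n := n); rw [pow_succ]; omega

lemma icc_sum_eq_range {M : Type*} [AddCommMonoid M] (m n : ℕ) (f : ℕ → M) :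
    ∑ i ∈ Icc m n, f i = ∑ i ∈ range (n+1-m), f (m+i) := by
  rw [← Finset.Ico_add_one_right_eq_Icc, Finset.sum_Ico_eq_sum_range]

/-- A YES instance of SUBSET SUM INTERVAL yields a
pure-strategy Nash equilibrium of the game `(X, Ξ, u_L, u_G)`. -/
theorem yes_instance_has_pne
    (hk : 1 ≤ k) (hr : 1 ≤ r) (hq : ∀ i, 1 ≤ i → i ≤ k → 0 < q i)
    (hp : 0 < p) (hpt : p < t) (htp : t = p + 2 ^ r)
    (hyes : ∃ s : ℤ, (p : ℤ) ≤ s ∧ s ≤ (t : ℤ) - 1 ∧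
      ∀ I ⊆ Finset.Icc 1 k, (∑ i ∈ I, (q i : ℤ)) ≠ s) :
    ∃ x ∈ Xset k r, ∃ ξ ∈ Ξset k r t q,
      (∀ x' ∈ Xset k r, uL k r t q x' ξ ≤ uL k r t q x ξ) ∧
      (∀ ξ' ∈ Ξset k r t q, uG k r t q x ξ' ≤ uG k r t q x ξ) := by
  obtain ⟨s, hs1, hs2, hsum⟩ := hyes
  set P := Pval k r with hP
  set Q := Qval k q with hQ
  set T := Tval k r t q with hT
  -- basic numeric facts
  have hQ1 : 1 ≤ Q := by
    rw [hQ, Qval]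
    calc 1 ≤ q 1 := hq 1 le_rfl hk
    _ ≤ _ := Finset.single_le_sum (f := q) (fun i _ => Nat.zero_le _) (by simp [hk])
  have hT1 : 1 ≤ T := by
    rw [hT, Tval]; have : 2 ≤ t := by omega
    omega
  -- the special value c and its bits
  set c : ℕ := (s - p).toNat with hc
  have hcs : (c : ℤ) = s - p := Int.toNat_of_nonneg (by omega)
  have hclt : c < 2^r := by
    have h2 : (c : ℤ) < 2^r := by
      rw [hcs]; push_cast [htp] at hs2 ⊢; omega
    exact_mod_cast h2
  set d : ℕ := 2^r - 1 - c with hd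
  have hcd : c + d + 1 = 2^r := by omega
  have hT2 : T = p + c + d + r * Q := by
    rw [hT, Tval, htp, ← hQ]; omega
  set b : ℕ → ℕ := fun j => c / 2^j % 2 with hbdef
  have hb01 : ∀ j, b j = 0 ∨ b j = 1 := by
    intro j; rw [hbdef]; dsimp only; omega
  -- the strategies
  set xb : ℕ → ℝ := fun i =>
    if i = 0 then 1
    else if i ≤ k then 0
    else if i ≤ k + r then (b (i - k - 1) : ℝ)
    else if i ≤ k + 2*r then 1 - (b (i - k - r - 1) : ℝ)
    else 0 with hxb
  set ξb : ℕ → ℝ := fun i => if i = 0 then (1:ℝ) else 0 with hξb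
  have hPval : P = k + 2*r := rfl
  -- pointwise facts about xb
  have hx01 : ∀ i, xb i = 0 ∨ xb i = 1 := by
    intro i
    rw [hxb]
    dsimp only
    split_ifs with h1 h2 h3 h4
    · right; rfl
    · left; rfl
    · rcases hb01 (i - k - 1) with h | h <;> simp [h]
    · rcases hb01 (i - k - r - 1) with h | h <;> simp [h]
    · left; rfl
  have hxtail : ∀ i, k + 2*r < i → xb i = 0 := by
    intro i hi; rw [hxb]; dsimp only
    split_ifs with h1 h2 h3 h4 <;> first | rfl | omega
  have hx0 : xb 0 = 1 := by simp [hxb]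
  have hxk0 : ∀ i, 1 ≤ i → i ≤ k → xb i = 0 := by
    intro i h1 h2; rw [hxb]; dsimp only
    rw [if_neg (by omega), if_pos h2]
  -- sum facts
  have hS1 : ∑ i ∈ Icc (k+1) (k+r), xb i = ∑ j ∈ range r, (b j : ℝ) := by
    rw [icc_sum_eq_range]
    have hre : k + r + 1 - (k+1) = r := by omega
    rw [hre]
    refine Finset.sum_congr rfl ?_
    intro j hj
    rw [Finset.mem_range] at hj
    rw [hxb]; dsimp only
    rw [if_neg (by omega), if_neg (by omega), if_pos (by omega)]
    have he : k + 1 + j - k - 1 = j := by omega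
    rw [he]
  have hS2 : ∑ i ∈ Icc (k+r+1) (k+2*r), xb i = ∑ j ∈ range r, (1 - (b j : ℝ)) := by
    rw [icc_sum_eq_range]
    have hre : k + 2*r + 1 - (k+r+1) = r := by omega
    rw [hre]
    refine Finset.sum_congr rfl ?_
    intro j hj
    rw [Finset.mem_range] at hj
    rw [hxb]; dsimp only
    rw [if_neg (by omega), if_neg (by omega), if_neg (by omega), if_pos (by omega)]
    have he : k + r + 1 + j - k - r - 1 = j := by omega
    rw [he]
  have hsplit : ∀ f : ℕ → ℝ, ∑ i ∈ Icc (k+1) (k+2*r), f i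
      = ∑ i ∈ Icc (k+1) (k+r), f i + ∑ i ∈ Icc (k+r+1) (k+2*r), f i := by
    intro f
    rw [← Finset.Ico_add_one_right_eq_Icc, ← Finset.Ico_add_one_right_eq_Icc, ← Finset.Ico_add_one_right_eq_Icc]
    rw [← Finset.sum_Ico_consecutive (m := k+1) (n := k+r+1) (k := k+2*r+1) _ (by omega) (by omega)]
  have hF3 : ∑ i ∈ Icc (k+1) (k+2*r), xb i = (r : ℝ) := by
    rw [hsplit, hS1, hS2, ← Finset.sum_add_distrib]
    have : ∀ j ∈ range r, ((b j : ℝ) + (1 - (b j : ℝ))) = 1 := by intro j _; ring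
    rw [Finset.sum_congr rfl this]
    simp
  have hxnn : ∀ i, 0 ≤ xb i := by
    intro i; rcases hx01 i with h | h <;> rw [h] <;> norm_num
  have hSd : ∑ i ∈ Icc (k+1) (k+r), (2:ℝ)^(i-k-1) * (1 - xb i) = (d : ℝ) := by
    have h1 : ∑ j ∈ range r, 2^j * b j = c := bits_sum r c hclt
    have h2 := two_pow_sum r
    have h3 : ∑ j ∈ range r, 2^j * (1 - b j) + ∑ j ∈ range r, 2^j * (b j) = ∑ j ∈ range r, 2^j := by
      rw [← Finset.sum_add_distrib]
      refine Finset.sum_congr rfl ?_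
      intro j _
      rcases hb01 j with h | h <;> simp [h]
    have hn1 : ∑ j ∈ range r, 2^j * (1 - b j) = d := by omega
    have hcast : ∑ i ∈ Icc (k+1) (k+r), (2:ℝ)^(i-k-1) * (1 - xb i)
        = ∑ j ∈ range r, ((2^j * (1 - b j) : ℕ) : ℝ) := by
      rw [icc_sum_eq_range]
      have hre : k + r + 1 - (k+1) = r := by omega
      rw [hre]
      refine Finset.sum_congr rfl ?_
      intro j hj
      rw [Finset.mem_range] at hj
      rw [hxb]; dsimp only
      rw [if_neg (by omega), if_neg (by omega), if_pos (by omega)]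
      have he : k + 1 + j - k - 1 = j := by omega
      rw [he]
      rcases hb01 j with h | h <;> rw [h] <;> push_cast <;> ring
    rw [hcast, ← Nat.cast_sum, hn1]
  have hF3' : ∑ i ∈ Icc (k+1) P, xb i = (r : ℝ) := by rw [hPval]; exact hF3
  -- membership of xb
  have hxmem : xb ∈ Xset k r := by
    refine ⟨?_, ?_, hxk0, ?_, ?_, ?_, ?_⟩
    · intro i _; rcases hx01 i with h | h <;> rw [h]
      · exact Or.inl le_rfl
      · exact Or.inr le_rfl
    · intro i _ _; exact hxnn i
    · rw [← hP]; exact le_of_eq hF3'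
    · intro i h1 h2
      rw [← hP, hxtail (P + i) (by omega), add_zero]
      rcases hx01 i with h | h <;> rw [h] <;> norm_num
    · intro i h1 h2
      rw [← hP, hxtail (P + i) (by omega), add_zero, hx0]
    · intro i hi; exact hxtail i (by omega)
  -- membership of ξb
  have hξ0 : ξb 0 = 1 := by simp [hξb]
  have hξz : ∀ i, 1 ≤ i → ξb i = 0 := by
    intro i hi; rw [hξb]; dsimp only; rw [if_neg (by omega)]
  have hξmem : ξb ∈ Ξset k r t q := by
    refine ⟨?_, ?_, ?_, ?_⟩
    · intro i _
      by_cases h : i = 0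
      · right; rw [h]; exact hξ0
      · left; exact hξz i (by omega)
    · rw [← hP]
      have hz : ∑ i ∈ Icc (k+1) P, ξb i = 0 :=
        Finset.sum_eq_zero fun i hi => hξz i (by rw [Finset.mem_Icc] at hi; omega)
      rw [hz, hξ0]; simp
    · rw [← hT, ← hQ, ← hP, hξ0]
      have z1 : ∑ i ∈ Icc 1 k, (q i:ℝ) * ξb i = 0 :=
        Finset.sum_eq_zero fun i hi => by
          rw [hξz i (by rw [Finset.mem_Icc] at hi; omega)]; ring
      have z2 : ∑ i ∈ Icc (k+1) P, ξb i = 0 :=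
        Finset.sum_eq_zero fun i hi => hξz i (by rw [Finset.mem_Icc] at hi; omega)
      have z3 : ∑ i ∈ Icc (k+1) (k+r), (2:ℝ)^(i-k-1) * ξb i = 0 :=
        Finset.sum_eq_zero fun i hi => by
          rw [hξz i (by rw [Finset.mem_Icc] at hi; omega)]; ring
      rw [z1, z2, z3]
      push_cast
      linarith
    · intro i hi; exact hξz i (by omega)
  have hT1R : (1:ℝ) ≤ (T:ℝ) := by exact_mod_cast hT1
  have hQnnR : (0:ℝ) ≤ (Q:ℝ) := Nat.cast_nonneg Q
  -- Latin optimality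
  have euL : ∀ x : ℕ → ℝ, uL k r t q x ξb = ((T:ℝ) - 1) * x 0 := by
    intro x
    simp only [uL]
    rw [← hT, ← hQ, ← hP]
    have z1 : ∑ i ∈ Icc 1 k, (q i:ℝ) * ξb i * x (P + i) = 0 :=
      Finset.sum_eq_zero fun i hi => by
        rw [hξz i (by rw [Finset.mem_Icc] at hi; omega)]; ring
    have z2 : ∑ i ∈ Icc (k+1) P, ξb i * x (P + i) = 0 :=
      Finset.sum_eq_zero fun i hi => by
        rw [hξz i (by rw [Finset.mem_Icc] at hi; omega)]; ring
    rw [z1, z2, hξ0]; ring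
  have hLbest : ∀ x' ∈ Xset k r, uL k r t q x' ξb ≤ uL k r t q xb ξb := by
    intro x' hx'
    obtain ⟨h1, h2, h3, h4, h5, h6, h7⟩ := hx'
    rw [← hP] at h2 h5 h6
    rw [euL x', euL xb, hx0, mul_one]
    have hx'le : x' 0 ≤ 1 := by
      have ha := h6 1 le_rfl (by omega)
      have hb2 := h2 (P+1) (by omega) (by omega)
      linarith
    nlinarith
  -- Greek optimality
  have hGbest : ∀ ξ' ∈ Ξset k r t q, uG k r t q xb ξ' ≤ uG k r t q xb ξb := by
    intro ξ' hξ'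
    obtain ⟨g0, gcov, gbud, gz⟩ := hξ'
    rw [← hP] at g0 gcov gz
    rw [← hT, ← hQ, ← hP] at gbud
    have hval : uG k r t q xb ξb = (T:ℝ) - 1 := by
      simp only [uG]
      rw [← hT, ← hQ, ← hP]
      have z1 : ∑ i ∈ Icc 1 k, (q i:ℝ) * ξb i * (1 - xb (P+i)) = 0 :=
        Finset.sum_eq_zero fun i hi => by
          rw [hξz i (by rw [Finset.mem_Icc] at hi; omega)]; ring
      have z2 : ∑ i ∈ Icc (k+1) P, ξb i * (1 - xb i - xb (P+i)) = 0 :=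
        Finset.sum_eq_zero fun i hi => by
          rw [hξz i (by rw [Finset.mem_Icc] at hi; omega)]; ring
      have z3 : ∑ i ∈ Icc (k+1) (k+r), (2:ℝ)^(i-k-1) * ξb i * (1 - xb i - xb (P+i)) = 0 :=
        Finset.sum_eq_zero fun i hi => by
          rw [hξz i (by rw [Finset.mem_Icc] at hi; omega)]; ring
      have z4 : ∑ i ∈ Icc (k+1) P, (xb i * ξb i + (1 - xb i) * (1 - ξb i - ξb 0)) = 0 :=
        Finset.sum_eq_zero fun i hi => by
          rw [hξz i (by rw [Finset.mem_Icc] at hi; omega), hξ0]; ring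
      rw [z1, z2, z3, z4, hξ0]; ring
    rw [hval]
    have hxPz : ∀ i, 1 ≤ i → xb (P + i) = 0 := fun i hi => hxtail _ (by omega)
    have gnn : ∀ i, i ≤ P → 0 ≤ ξ' i := by
      intro i hi; rcases g0 i hi with h | h <;> rw [h] <;> norm_num
    set A := ∑ i ∈ Icc 1 k, (q i:ℝ) * ξ' i with hA
    set M := ∑ i ∈ Icc (k+1) P, ξ' i with hM
    set DD := ∑ i ∈ Icc (k+1) (k+r), (2:ℝ)^(i-k-1) * ξ' i with hDD
    set B := ∑ i ∈ Icc (k+1) P, ξ' i * (1 - xb i) with hB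
    set C := ∑ i ∈ Icc (k+1) (k+r), (2:ℝ)^(i-k-1) * ξ' i * (1 - xb i) with hC
    set pen := ∑ i ∈ Icc (k+1) P, (xb i * ξ' i + (1 - xb i) * (1 - ξ' i - ξ' 0)) with hpen
    have hle : uG k r t q xb ξ' = ((T:ℝ) - 1) * ξ' 0 + A + (Q:ℝ) * B + C - (T:ℝ) * pen := by
      simp only [uG]
      rw [← hT, ← hQ, ← hP, hA, hB, hC, hpen]
      have eA : ∑ i ∈ Icc 1 k, (q i:ℝ) * ξ' i * (1 - xb (P+i)) = ∑ i ∈ Icc 1 k, (q i:ℝ) * ξ' i :=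
        Finset.sum_congr rfl fun i hi => by
          rw [hxPz i (by rw [Finset.mem_Icc] at hi; omega)]; ring
      have eB : ∑ i ∈ Icc (k+1) P, ξ' i * (1 - xb i - xb (P+i))
          = ∑ i ∈ Icc (k+1) P, ξ' i * (1 - xb i) :=
        Finset.sum_congr rfl fun i hi => by
          rw [hxPz i (by rw [Finset.mem_Icc] at hi; omega)]; ring
      have eC : ∑ i ∈ Icc (k+1) (k+r), (2:ℝ)^(i-k-1) * ξ' i * (1 - xb i - xb (P+i))
          = ∑ i ∈ Icc (k+1) (k+r), (2:ℝ)^(i-k-1) * ξ' i * (1 - xb i) :=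
        Finset.sum_congr rfl fun i hi => by
          rw [hxPz i (by rw [Finset.mem_Icc] at hi; omega)]; ring
      rw [eA, eB, eC]
    have hAnn : 0 ≤ A := Finset.sum_nonneg fun i hi => by
      rw [Finset.mem_Icc] at hi
      exact mul_nonneg (Nat.cast_nonneg _) (gnn i (by omega))
    have hMnn : 0 ≤ M := Finset.sum_nonneg fun i hi => by
      rw [Finset.mem_Icc] at hi; exact gnn i (by omega)
    have hDnn : 0 ≤ DD := Finset.sum_nonneg fun i hi => by
      rw [Finset.mem_Icc] at hi
      exact mul_nonneg (by positivity) (gnn i (by omega))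
    rcases g0 0 (Nat.zero_le P) with hg0 | hg0
    · -- ξ' 0 = 0
      rw [hg0] at gbud
      by_cases hall : ∀ i ∈ Icc (k+1) P, ξ' i = 1 - xb i
      · -- zero penalty case
        have hpen0 : pen = 0 := by
          rw [hpen]
          refine Finset.sum_eq_zero fun i hi => ?_
          rw [hall i hi, hg0]
          rcases hx01 i with h | h <;> rw [h] <;> ring
        have hBr : B = (r:ℝ) := by
          rw [hB]
          have e1 : ∀ i ∈ Icc (k+1) P, ξ' i * (1 - xb i) = 1 - xb i := fun i hi => by
            rw [hall i hi]; rcases hx01 i with h | h <;> rw [h] <;> ring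
          rw [Finset.sum_congr rfl e1, Finset.sum_sub_distrib, hF3', Finset.sum_const,
            Nat.card_Icc]
          have : P + 1 - (k+1) = 2*r := by omega
          rw [this]
          push_cast; ring
        have hMr : M = (r:ℝ) := by
          rw [hM]
          have e1 : ∀ i ∈ Icc (k+1) P, ξ' i = 1 - xb i := hall
          rw [Finset.sum_congr rfl e1, Finset.sum_sub_distrib, hF3', Finset.sum_const,
            Nat.card_Icc]
          have : P + 1 - (k+1) = 2*r := by omega
          rw [this]
          push_cast; ring
        have hsubmem : ∀ i ∈ Icc (k+1) (k+r), i ∈ Icc (k+1) P := by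
          intro i hi; rw [Finset.mem_Icc] at hi ⊢; omega
        have hCd : C = (d:ℝ) := by
          rw [hC]
          have e1 : ∀ i ∈ Icc (k+1) (k+r), (2:ℝ)^(i-k-1) * ξ' i * (1 - xb i)
              = (2:ℝ)^(i-k-1) * (1 - xb i) := fun i hi => by
            rw [hall i (hsubmem i hi)]
            rcases hx01 i with h | h <;> rw [h] <;> ring
          rw [Finset.sum_congr rfl e1, hSd]
        have hDd : DD = (d:ℝ) := by
          rw [hDD]
          have e1 : ∀ i ∈ Icc (k+1) (k+r), (2:ℝ)^(i-k-1) * ξ' i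
              = (2:ℝ)^(i-k-1) * (1 - xb i) := fun i hi => by
            rw [hall i (hsubmem i hi)]
          rw [Finset.sum_congr rfl e1, hSd]
        -- the subset-sum argument
        set I : Finset ℕ := Finset.filter (fun i => ξ' i = 1) (Icc 1 k) with hI
        set N : ℕ := ∑ i ∈ I, q i with hN
        have hAN : A = (N:ℝ) := by
          rw [hA, ← Finset.sum_filter_add_sum_filter_not (Icc 1 k) (fun i => ξ' i = 1)]
          have t1 : ∑ i ∈ I, (q i:ℝ) * ξ' i = ∑ i ∈ I, (q i:ℝ) :=
            Finset.sum_congr rfl fun i hi => by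
              rw [(Finset.mem_filter.mp hi).2]; ring
          have t2 : ∑ i ∈ Finset.filter (fun i => ¬ ξ' i = 1) (Icc 1 k), (q i:ℝ) * ξ' i = 0 :=
            Finset.sum_eq_zero fun i hi => by
              obtain ⟨hi1, hi2⟩ := Finset.mem_filter.mp hi
              rw [Finset.mem_Icc] at hi1
              rcases g0 i (by omega) with h | h
              · rw [h]; ring
              · exact absurd h hi2
          rw [← hI, t1, t2, add_zero, hN]
          push_cast
          rfl
        have hNne : N ≠ p + c := by
          intro hcon
          apply hsum I (Finset.filter_subset _ _)
          have : (∑ i ∈ I, (q i : ℤ)) = (N : ℤ) := by rw [hN]; push_cast; rfl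
          rw [this, hcon]
          push_cast
          omega
        have hbudN : N + r * Q + d ≤ T := by
          rw [hMr, hDd, hAN] at gbud
          have : ((N + r * Q + d : ℕ) : ℝ) ≤ (T:ℝ) := by push_cast; linarith
          exact_mod_cast this
        have hfin : N + r * Q + d + 1 ≤ T := by omega
        rw [hle, hg0, hpen0, hBr, hCd, hAN]
        have : ((N + r * Q + d + 1 : ℕ) : ℝ) ≤ (T:ℝ) := by exact_mod_cast hfin
        push_cast at this
        linarith
      · -- positive penalty case
        push_neg at hall
        obtain ⟨i0, hi0mem, hi0⟩ := hall
        have hi0k : k + 1 ≤ i0 ∧ i0 ≤ P := Finset.mem_Icc.mp hi0mem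
        have hterm_nn : ∀ i ∈ Icc (k+1) P,
            0 ≤ xb i * ξ' i + (1 - xb i) * (1 - ξ' i - ξ' 0) := by
          intro i hi
          rw [Finset.mem_Icc] at hi
          rcases hx01 i with h | h <;> rcases g0 i (by omega) with h' | h' <;>
            rw [h, h', hg0] <;> norm_num
        have hterm1 : xb i0 * ξ' i0 + (1 - xb i0) * (1 - ξ' i0 - ξ' 0) = 1 := by
          rw [hg0]
          rcases hx01 i0 with h | h <;> rcases g0 i0 hi0k.2 with h' | h'
          · rw [h, h']; norm_num
          · exfalso; apply hi0; rw [h, h']; norm_num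
          · exfalso; apply hi0; rw [h, h']; norm_num
          · rw [h, h']; norm_num
        have hpen1 : 1 ≤ pen := by
          rw [hpen]
          calc (1:ℝ) = xb i0 * ξ' i0 + (1 - xb i0) * (1 - ξ' i0 - ξ' 0) := hterm1.symm
            _ ≤ _ := Finset.single_le_sum hterm_nn hi0mem
        have hBM : B ≤ M := by
          rw [hB, hM]
          refine Finset.sum_le_sum fun i hi => ?_
          rw [Finset.mem_Icc] at hi
          calc ξ' i * (1 - xb i) ≤ ξ' i * 1 :=
                mul_le_mul_of_nonneg_left (by linarith [hxnn i]) (gnn i (by omega))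
            _ = ξ' i := mul_one _
        have hCD : C ≤ DD := by
          rw [hC, hDD]
          refine Finset.sum_le_sum fun i hi => ?_
          rw [Finset.mem_Icc] at hi
          have h2nn : (0:ℝ) ≤ (2:ℝ)^(i-k-1) * ξ' i :=
            mul_nonneg (by positivity) (gnn i (by omega))
          calc (2:ℝ)^(i-k-1) * ξ' i * (1 - xb i) ≤ (2:ℝ)^(i-k-1) * ξ' i * 1 :=
                mul_le_mul_of_nonneg_left (by linarith [hxnn i]) h2nn
            _ = (2:ℝ)^(i-k-1) * ξ' i := mul_one _
        rw [hle, hg0]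
        have hQB : (Q:ℝ) * B ≤ (Q:ℝ) * M := mul_le_mul_of_nonneg_left hBM hQnnR
        have hTp : (T:ℝ) * 1 ≤ (T:ℝ) * pen := mul_le_mul_of_nonneg_left hpen1 (by linarith)
        linarith
    · -- ξ' 0 = 1
      rw [hg0] at gbud
      have hQM : 0 ≤ (Q:ℝ) * M := mul_nonneg hQnnR hMnn
      have hA0 : A = 0 := le_antisymm (by linarith) hAnn
      have hQ1R : (1:ℝ) ≤ (Q:ℝ) := by exact_mod_cast hQ1
      have hM0 : M = 0 := by
        have hMQ : M ≤ (Q:ℝ) * M := le_mul_of_one_le_left hMnn hQ1R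
        linarith
      have hz1 : ∀ i ∈ Icc 1 k, ξ' i = 0 := by
        intro i hi
        have := (Finset.sum_eq_zero_iff_of_nonneg fun i hi => by
          rw [Finset.mem_Icc] at hi
          exact mul_nonneg (Nat.cast_nonneg _) (gnn i (by omega))).mp hA0 i hi
        have hqi : (0:ℝ) < (q i : ℝ) := by
          rw [Finset.mem_Icc] at hi
          exact_mod_cast hq i hi.1 hi.2
        rcases mul_eq_zero.mp this with h | h
        · exact absurd h (ne_of_gt hqi)
        · exact h
      have hz2 : ∀ i ∈ Icc (k+1) P, ξ' i = 0 := by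
        intro i hi
        exact (Finset.sum_eq_zero_iff_of_nonneg fun i hi => by
          rw [Finset.mem_Icc] at hi; exact gnn i (by omega)).mp hM0 i hi
      have hA0' : A = 0 := hA0
      have hB0 : B = 0 := by
        rw [hB]; exact Finset.sum_eq_zero fun i hi => by rw [hz2 i hi]; ring
      have hC0 : C = 0 := by
        rw [hC]
        exact Finset.sum_eq_zero fun i hi => by
          rw [hz2 i (by rw [Finset.mem_Icc] at hi ⊢; omega)]; ring
      have hpen0 : pen = 0 := by
        rw [hpen]
        exact Finset.sum_eq_zero fun i hi => by rw [hz2 i hi, hg0]; ring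
      rw [hle, hg0, hA0, hB0, hC0, hpen0]
      linarith
  exact ⟨xb, hxmem, ξb, hξmem, hLbest, hGbest⟩


end PneHardness
end

section
/- Every pure-strategy Nash equilibrium (x̄, ξ̄) of the two-player game (X, Ξ, u_L, u_G) satisfies ξ̄₀ ≠ 0 (equivalently, since ξ̄₀ ∈ {0,1}, it satisfies ξ̄₀ = 1). -/
open Finset

namespace PneHardness

variable (k r p t : ℕ) (q : ℕ → ℕ)

/-- Every pure-strategy Nash equilibrium `(x̄, ξ̄)` of the game
`(X, Ξ, u_L, u_G)` satisfies `ξ̄₀ ≠ 0`. -/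
theorem pne_has_xi0_ne_zero
    (hk : 1 ≤ k) (hr : 1 ≤ r) (hq : ∀ i, 1 ≤ i → i ≤ k → 0 < q i)
    (hp : 0 < p) (hpt : p < t) (htp : t = p + 2 ^ r)
    (x ξ : ℕ → ℝ) (hx : x ∈ Xset k r) (hξ : ξ ∈ Ξset k r t q)
    (hLat : ∀ x' ∈ Xset k r, uL k r t q x' ξ ≤ uL k r t q x ξ)
    (hGr : ∀ ξ' ∈ Ξset k r t q, uG k r t q x ξ' ≤ uG k r t q x ξ) :
    ξ 0 ≠ 0 := by
  intro hξ0
  obtain ⟨hx1, hx2, hx3, hx4, hx5, hx6, hx7⟩ := hx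
  obtain ⟨hb, hcov, hbud, hz⟩ := hξ
  have hPeq : Pval k r = k + 2 * r := rfl
  -- basic size facts
  have hQ1 : 1 ≤ Qval k q := by
    have h1 : (1:ℕ) ∈ Finset.Icc 1 k := by simp [hk]
    calc 1 ≤ q 1 := hq 1 le_rfl hk
      _ ≤ Qval k q := Finset.single_le_sum (f := q) (fun i _ => Nat.zero_le _) h1
  have h2r : 2 ≤ 2 ^ r := by
    calc 2 = 2 ^ 1 := rfl
      _ ≤ 2 ^ r := Nat.pow_le_pow_right (by norm_num) hr
  have hT2 : 2 ≤ Tval k r t q := by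
    have : 2 ≤ t - 1 := by omega
    unfold Tval; omega
  have hξnn : ∀ i, i ≤ Pval k r → 0 ≤ ξ i := by
    intro i hi; rcases hb i hi with h | h <;> simp [h]
  have hξle1 : ∀ i, i ≤ Pval k r → ξ i ≤ 1 := by
    intro i hi; rcases hb i hi with h | h <;> simp [h]
  have hξsq : ∀ i, i ≤ Pval k r → ξ i * ξ i = ξ i := by
    intro i hi; rcases hb i hi with h | h <;> simp [h]
  have hx0 : ∀ i, 1 ≤ i → i ≤ Pval k r →
      0 ≤ x i ∧ x i ≤ 1 ∧ 0 ≤ x (Pval k r + i) ∧ x (Pval k r + i) ≤ 1 := by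
    intro i h1 h2
    have ha : 0 ≤ x i := hx2 i h1 (by omega)
    have hb' : 0 ≤ x (Pval k r + i) := hx2 (Pval k r + i) (by omega) (by omega)
    have hc : x i + x (Pval k r + i) ≤ 1 := hx5 i h1 h2
    exact ⟨ha, by linarith, hb', by linarith⟩
  -- the Latin deviation
  set x' : ℕ → ℝ := fun j => if Pval k r < j then ξ (j - Pval k r) else 0 with hx'def
  have hx'lo : ∀ j, j ≤ Pval k r → x' j = 0 := by
    intro j hj
    have : ¬ Pval k r < j := by omega
    simp [hx'def, this]
  have hx'P : ∀ i, 1 ≤ i → x' (Pval k r + i) = ξ i := by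
    intro i h
    have h1 : Pval k r < Pval k r + i := by omega
    have h2 : Pval k r + i - Pval k r = i := by omega
    simp [hx'def, h1, h2]
  have hx'01 : ∀ j, x' j = 0 ∨ x' j = 1 := by
    intro j
    by_cases h : Pval k r < j
    · by_cases h2 : j ≤ 2 * Pval k r
      · simpa [hx'def, h] using hb (j - Pval k r) (by omega)
      · left; simp only [hx'def, if_pos h]; exact hz _ (by omega)
    · left; exact hx'lo j (by omega)
  have hx'mem : x' ∈ Xset k r := by
    refine ⟨?_, ?_, ?_, ?_, ?_, ?_, ?_⟩
    · intro i _
      rcases hx'01 i with h | h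
      · exact Or.inl (le_of_eq h)
      · exact Or.inr (ge_of_eq h)
    · intro i _ _
      rcases hx'01 i with h | h <;> simp [h]
    · intro i h1 h2; exact hx'lo i (by omega)
    · have : ∀ i ∈ Finset.Icc (k+1) (Pval k r), x' i = 0 := by
        intro i hi
        simp only [Finset.mem_Icc] at hi
        exact hx'lo i hi.2
      rw [Finset.sum_eq_zero this]
      positivity
    · intro i h1 h2
      rw [hx'lo i h2, hx'P i h1]
      simpa using hξle1 i h2
    · intro i h1 h2
      rw [hx'lo 0 (by omega), hx'P i h1]
      simpa using hξle1 i h2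
    · intro i hi
      simp only [hx'def, if_pos (show Pval k r < i by omega)]
      exact hz _ (by omega)
  -- value of the deviation
  have huL' : uL k r t q x' ξ =
      (∑ i ∈ Finset.Icc 1 k, (q i : ℝ) * ξ i)
        + (Qval k q : ℝ) * ∑ i ∈ Finset.Icc (k+1) (Pval k r), ξ i := by
    unfold uL
    have e1 : ∀ i ∈ Finset.Icc 1 k,
        (q i : ℝ) * ξ i * x' (Pval k r + i) = (q i : ℝ) * ξ i := by
      intro i hi
      simp only [Finset.mem_Icc] at hi
      rw [hx'P i hi.1, mul_assoc, hξsq i (by omega)]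
    have e2 : ∀ i ∈ Finset.Icc (k+1) (Pval k r),
        ξ i * x' (Pval k r + i) = ξ i := by
      intro i hi
      simp only [Finset.mem_Icc] at hi
      rw [hx'P i (by omega), hξsq i hi.2]
    rw [Finset.sum_congr rfl e1, Finset.sum_congr rfl e2, hξ0]
    ring
  -- consequences of Latin optimality
  have hAterm : ∀ i ∈ Finset.Icc 1 k,
      (q i : ℝ) * ξ i * x (Pval k r + i) ≤ (q i : ℝ) * ξ i := by
    intro i hi
    simp only [Finset.mem_Icc] at hi
    obtain ⟨_, _, _, h4⟩ := hx0 i hi.1 (by omega)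
    have hnn : 0 ≤ (q i : ℝ) * ξ i :=
      mul_nonneg (Nat.cast_nonneg _) (hξnn i (by omega))
    exact mul_le_of_le_one_right hnn h4
  have hBterm : ∀ i ∈ Finset.Icc (k+1) (Pval k r),
      ξ i * x (Pval k r + i) ≤ ξ i := by
    intro i hi
    simp only [Finset.mem_Icc] at hi
    obtain ⟨_, _, _, h4⟩ := hx0 i (by omega) hi.2
    exact mul_le_of_le_one_right (hξnn i hi.2) h4
  have sA : (∑ i ∈ Finset.Icc 1 k, (q i : ℝ) * ξ i * x (Pval k r + i))
      ≤ ∑ i ∈ Finset.Icc 1 k, (q i : ℝ) * ξ i := Finset.sum_le_sum hAterm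
  have sB : (∑ i ∈ Finset.Icc (k+1) (Pval k r), ξ i * x (Pval k r + i))
      ≤ ∑ i ∈ Finset.Icc (k+1) (Pval k r), ξ i := Finset.sum_le_sum hBterm
  have hLat' := hLat x' hx'mem
  rw [huL'] at hLat'
  unfold uL at hLat'
  rw [hξ0] at hLat'
  simp only [mul_zero, zero_mul, zero_add] at hLat'
  have hQpos : (0:ℝ) < (Qval k q : ℝ) := by
    exact_mod_cast Nat.lt_of_lt_of_le Nat.zero_lt_one hQ1
  have hBeq : (∑ i ∈ Finset.Icc (k+1) (Pval k r), ξ i * x (Pval k r + i))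
      = ∑ i ∈ Finset.Icc (k+1) (Pval k r), ξ i := by
    have hQB : (Qval k q : ℝ) * (∑ i ∈ Finset.Icc (k+1) (Pval k r), ξ i)
        ≤ (Qval k q : ℝ) * ∑ i ∈ Finset.Icc (k+1) (Pval k r), ξ i * x (Pval k r + i) := by
      linarith
    exact le_antisymm sB (le_of_mul_le_mul_left hQB hQpos)
  have hAeq : (∑ i ∈ Finset.Icc 1 k, (q i : ℝ) * ξ i * x (Pval k r + i))
      = ∑ i ∈ Finset.Icc 1 k, (q i : ℝ) * ξ i := by
    rw [hBeq] at hLat'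
    linarith
  have hAterms := (Finset.sum_eq_sum_iff_of_le hAterm).mp hAeq
  have hBterms := (Finset.sum_eq_sum_iff_of_le hBterm).mp hBeq
  -- key structural facts at equilibrium
  have hkey : ∀ i, 1 ≤ i → i ≤ Pval k r → ξ i = 1 → x (Pval k r + i) = 1 := by
    intro i h1 h2 hξi
    by_cases hik : i ≤ k
    · have h := hAterms i (Finset.mem_Icc.mpr ⟨h1, hik⟩)
      rw [hξi, mul_one] at h
      have hqpos : (0:ℝ) < (q i : ℝ) := by exact_mod_cast hq i h1 hik
      exact mul_left_cancel₀ (ne_of_gt hqpos) (by rw [mul_one]; exact h)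
    · have h := hBterms i (Finset.mem_Icc.mpr ⟨by omega, h2⟩)
      rw [hξi, one_mul] at h
      exact h
  have hxi0 : ∀ i, k + 1 ≤ i → i ≤ Pval k r → ξ i = 1 → x i = 0 := by
    intro i h1 h2 hξi
    have h5 := hx5 i (by omega) h2
    have hone := hkey i (by omega) h2 hξi
    have hnn := hx2 i (by omega) (by omega)
    rw [hone] at h5
    linarith
  -- bound the Greek equilibrium payoff by 0
  have hguG : uG k r t q x ξ ≤ 0 := by
    unfold uG
    have t1 : ∑ i ∈ Finset.Icc 1 k, (q i : ℝ) * ξ i * (1 - x (Pval k r + i)) = 0 := by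
      apply Finset.sum_eq_zero
      intro i hi
      simp only [Finset.mem_Icc] at hi
      rcases hb i (by omega) with h | h
      · simp [h]
      · rw [h, hkey i hi.1 (by omega) h]; ring
    have t2 : ∑ i ∈ Finset.Icc (k+1) (Pval k r), ξ i * (1 - x i - x (Pval k r + i)) = 0 := by
      apply Finset.sum_eq_zero
      intro i hi
      simp only [Finset.mem_Icc] at hi
      rcases hb i (by omega) with h | h
      · simp [h]
      · rw [h, hkey i (by omega) hi.2 h, hxi0 i hi.1 hi.2 h]; ring
    have t3 : ∑ i ∈ Finset.Icc (k+1) (k+r),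
        (2:ℝ) ^ (i - k - 1) * ξ i * (1 - x i - x (Pval k r + i)) = 0 := by
      apply Finset.sum_eq_zero
      intro i hi
      simp only [Finset.mem_Icc] at hi
      have hiP : i ≤ Pval k r := by omega
      rcases hb i (by omega) with h | h
      · simp [h]
      · rw [h, hkey i (by omega) hiP h, hxi0 i hi.1 hiP h]; ring
    have t4 : 0 ≤ ∑ i ∈ Finset.Icc (k+1) (Pval k r),
        (x i * ξ i + (1 - x i) * (1 - ξ i - ξ 0)) := by
      apply Finset.sum_nonneg
      intro i hi
      simp only [Finset.mem_Icc] at hi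
      obtain ⟨hn, hle, _, _⟩ := hx0 i (by omega) hi.2
      rcases hb i (by omega) with h | h
      · rw [h, hξ0]; ring_nf; linarith
      · rw [h, hξ0, hxi0 i hi.1 hi.2 h]; norm_num
    rw [t1, t2, t3, hξ0]
    have hTnn : (0:ℝ) ≤ (Tval k r t q : ℝ) := Nat.cast_nonneg _
    have := mul_nonneg hTnn t4
    rw [hξ0] at this
    linarith [this]
  -- the Greek deviation
  set ξ' : ℕ → ℝ := fun j => if j = 0 then 1 else 0 with hξ'def
  have hξ'0 : ξ' 0 = 1 := by simp [hξ'def]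
  have hξ'pos : ∀ i, 1 ≤ i → ξ' i = 0 := by
    intro i hi
    have : i ≠ 0 := by omega
    simp [hξ'def, this]
  have hξ'mem : ξ' ∈ Ξset k r t q := by
    refine ⟨?_, ?_, ?_, ?_⟩
    · intro i _
      by_cases h : i = 0
      · right; simp [hξ'def, h]
      · left; simp [hξ'def, h]
    · have hs : ∑ i ∈ Finset.Icc (k+1) (Pval k r), ξ' i = 0 := by
        apply Finset.sum_eq_zero
        intro i hi
        simp only [Finset.mem_Icc] at hi
        exact hξ'pos i (by omega)
      rw [hs, hξ'0]
      simp
    · have hs1 : ∑ i ∈ Finset.Icc 1 k, (q i : ℝ) * ξ' i = 0 := by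
        apply Finset.sum_eq_zero
        intro i hi
        simp only [Finset.mem_Icc] at hi
        rw [hξ'pos i hi.1, mul_zero]
      have hs2 : ∑ i ∈ Finset.Icc (k+1) (Pval k r), ξ' i = 0 := by
        apply Finset.sum_eq_zero
        intro i hi
        simp only [Finset.mem_Icc] at hi
        exact hξ'pos i (by omega)
      have hs3 : ∑ i ∈ Finset.Icc (k+1) (k+r), (2:ℝ) ^ (i - k - 1) * ξ' i = 0 := by
        apply Finset.sum_eq_zero
        intro i hi
        simp only [Finset.mem_Icc] at hi
        rw [hξ'pos i (by omega), mul_zero]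
      rw [hs1, hs2, hs3, hξ'0]
      simp
    · intro i hi
      exact hξ'pos i (by omega)
  have huG' : uG k r t q x ξ' = (Tval k r t q : ℝ) - 1 := by
    unfold uG
    have e1 : ∑ i ∈ Finset.Icc 1 k, (q i : ℝ) * ξ' i * (1 - x (Pval k r + i)) = 0 := by
      apply Finset.sum_eq_zero
      intro i hi
      simp only [Finset.mem_Icc] at hi
      rw [hξ'pos i hi.1]; ring
    have e2 : ∑ i ∈ Finset.Icc (k+1) (Pval k r), ξ' i * (1 - x i - x (Pval k r + i)) = 0 := by
      apply Finset.sum_eq_zero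
      intro i hi
      simp only [Finset.mem_Icc] at hi
      rw [hξ'pos i (by omega)]; ring
    have e3 : ∑ i ∈ Finset.Icc (k+1) (k+r),
        (2:ℝ) ^ (i - k - 1) * ξ' i * (1 - x i - x (Pval k r + i)) = 0 := by
      apply Finset.sum_eq_zero
      intro i hi
      simp only [Finset.mem_Icc] at hi
      rw [hξ'pos i (by omega)]; ring
    have e4 : ∑ i ∈ Finset.Icc (k+1) (Pval k r),
        (x i * ξ' i + (1 - x i) * (1 - ξ' i - ξ' 0)) = 0 := by
      apply Finset.sum_eq_zero
      intro i hi
      simp only [Finset.mem_Icc] at hi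
      rw [hξ'pos i (by omega), hξ'0]; ring
    rw [e1, e2, e3, e4, hξ'0]
    ring
  have hfin := hGr ξ' hξ'mem
  rw [huG'] at hfin
  have hT2' : (2:ℝ) ≤ (Tval k r t q : ℝ) := by exact_mod_cast hT2
  linarith

end PneHardness
end

section
/- For every (h, y, x) ∈ ℝ³, the conditions x ≥ 0, y ≥ 0, h ≥ 0, y ≤ 1, h ≤ x, max(h − x, −h) ≥ 0, max(1 − y, −h) ≥ 0, max(y − 1, −h) ≥ 0, max(x − h, −y) ≥ 0, max(h − x, −y) ≥ 0, and max(y − 1, −y) ≥ 0 hold simultaneously if and only if (h, y, x) ∈ S. (This exhibits S as an extended formulation by the feasible set of a simple bilevel program, in which the six follower variables z₁, …, z₆ are uniquely determined as the six pairwise maxima above and are required to be nonnegative.) -/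
/-- The union of two polyhedra
`S = {(h,y,x) : x ≥ 0, h = x, y = 1} ∪ {(h,y,x) : x ≥ 0, h = 0, y = 0}`. -/
def Sset : Set (ℝ × ℝ × ℝ) :=
  {v | (0 ≤ v.2.2 ∧ v.1 = v.2.2 ∧ v.2.1 = 1) ∨ (0 ≤ v.2.2 ∧ v.1 = 0 ∧ v.2.1 = 0)}

/-- The bilevel extended formulation of `S`: the leader
constraints together with nonnegativity of the six follower optimal values
(which are the pairwise maxima below) hold iff `(h, y, x) ∈ S`. -/
theorem bilevel_extended_formulation (h y x : ℝ) :
    (0 ≤ x ∧ 0 ≤ y ∧ 0 ≤ h ∧ y ≤ 1 ∧ h ≤ x ∧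
      0 ≤ max (h - x) (-h) ∧ 0 ≤ max (1 - y) (-h) ∧ 0 ≤ max (y - 1) (-h) ∧
      0 ≤ max (x - h) (-y) ∧ 0 ≤ max (h - x) (-y) ∧ 0 ≤ max (y - 1) (-y)) ↔
    (h, y, x) ∈ Sset := by
  constructor
  · rintro ⟨hx, hy, hh, hy1, hhx, c1, c2, c3, c4, c5, c6⟩
    simp only [le_max_iff] at c1 c3 c5 c6
    simp only [Sset, Set.mem_setOf_eq]
    rcases c6 with h6 | h6
    · left
      have hy1' : y = 1 := le_antisymm hy1 (by linarith)
      refine ⟨hx, ?_, hy1'⟩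
      rcases c5 with h5 | h5
      · linarith
      · linarith
    · right
      have hy0 : y = 0 := le_antisymm (by linarith) hy
      refine ⟨hx, ?_, hy0⟩
      rcases c3 with h3 | h3
      · linarith
      · linarith
  · rintro (⟨hx, h1, h2⟩ | ⟨hx, h1, h2⟩) <;> simp only at hx h1 h2 <;> subst h1 <;> subst h2 <;>
      refine ⟨by linarith, by norm_num, by linarith, by norm_num, by linarith, ?_, ?_, ?_, ?_, ?_, ?_⟩ <;>
      simp [le_max_iff] <;> linarith
end

section
/- Let r ≥ 1 be an integer, p ∈ ℝ, and let real numbers a_i, b_i, c_i (for i = 1, …, r) and X satisfy: (a_i, b_i, c_i) ∈ S for each i, X = c_i for each i, and X = p + Σ_{i=1}^{r} 2^{i−1} b_i. Then X² = p·X + Σ_{i=1}^{r} 2^{i−1} a_i. -/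
open Finset

/-- If `(aᵢ, bᵢ, cᵢ) ∈ S`, `X = cᵢ` for all `i = 1, …, r`, and
`X = p + Σᵢ 2^{i−1} bᵢ`, then `X² = pX + Σᵢ 2^{i−1} aᵢ`. -/
theorem square_identity
    (r : ℕ) (hr : 1 ≤ r) (p : ℝ) (a b c : ℕ → ℝ) (X : ℝ)
    (hS : ∀ i, 1 ≤ i → i ≤ r → (a i, b i, c i) ∈ Sset)
    (hc : ∀ i, 1 ≤ i → i ≤ r → X = c i)
    (hX : X = p + ∑ i ∈ Finset.Icc 1 r, (2 : ℝ) ^ (i - 1) * b i) :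
    X ^ 2 = p * X + ∑ i ∈ Finset.Icc 1 r, (2 : ℝ) ^ (i - 1) * a i := by
  have key : ∀ i ∈ Finset.Icc 1 r, (2 : ℝ) ^ (i - 1) * a i = ((2 : ℝ) ^ (i - 1) * b i) * X := by
    intro i hi
    simp only [Finset.mem_Icc] at hi
    rcases hS i hi.1 hi.2 with ⟨_, h1, h2⟩ | ⟨_, h1, h2⟩
    · simp only at h1 h2
      rw [h1, h2, ← hc i hi.1 hi.2]; ring
    · simp only at h1 h2
      rw [h1, h2]; ring
  rw [Finset.sum_congr rfl key, ← Finset.sum_mul]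
  have : (∑ i ∈ Finset.Icc 1 r, (2 : ℝ) ^ (i - 1) * b i) = X - p := by linarith
  rw [this]; ring
end
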